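/- Let 2 ≤ q < ∞ and q* := q/(q−1). Then π_{2,q} = 2^{2/q − 1} · π_{q*,q}. -/

import Mathlib

open Real Set

/-- `F_{p,q}(x) = ∫₀ˣ (1 - t^q)^{-1/p} dt`. -/
noncomputable def genF (p q : ℝ) (x : ℝ) : ℝ :=
  ∫ t in (0:ℝ)..x, (1 - t ^ q) ^ (-(1 / p))

/-- The generalized π: `π_{p,q} = 2 F_{p,q}(1)`. -/
noncomputable def genPi (p q : ℝ) : ℝ := 2 * genF p q 1

/-- The inverse function of `F_{p,q} : [0,1] → [0, π_{p,q}/2]`;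
for `x ∈ [0, π_{p,q}/2]` this is exactly `F_{p,q}⁻¹(x)` since `F_{p,q}`
is a continuous strictly increasing bijection of `[0,1]` onto `[0, π_{p,q}/2]`. -/
noncomputable def sinBase (p q : ℝ) (x : ℝ) : ℝ :=
  sSup {s : ℝ | s ∈ Icc (0:ℝ) 1 ∧ genF p q s ≤ x}

/-- `sin_{p,q}` on `[0, π_{p,q}]`: equals `F_{p,q}⁻¹` on `[0, π_{p,q}/2]` and is
extended to `(π_{p,q}/2, π_{p,q}]` by `sin_{p,q}(π_{p,q} - x)`. -/
noncomputable def sinHalf (p q : ℝ) (x : ℝ) : ℝ :=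
  if x ≤ genPi p q / 2 then sinBase p q x else sinBase p q (genPi p q - x)

/-- `sin_{p,q}` on all of `ℝ`: the odd `2π_{p,q}`-periodic continuation. -/
noncomputable def genSin (p q : ℝ) (x : ℝ) : ℝ :=
  let a := genPi p q
  let y := x - 2 * a * (⌊x / (2 * a)⌋ : ℝ)
  if y ≤ a then sinHalf p q y else -(sinHalf p q (2 * a - y))

/-- `cos_{p,q} x = (sin_{p,q} x)'`. -/
noncomputable def genCos (p q : ℝ) (x : ℝ) : ℝ := deriv (genSin p q) x

/-!
The substitution `u = t ^ q` turns `F_{p,q}(1)` into `q⁻¹ B(1/q, 1 - 1/p)`. For `p = 2` the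
second argument of the Beta function is `1/2`, and for `p = q*` it is `1/q`; Legendre's
duplication formula `Γ(a) Γ(a + 1/2) = 2^{1-2a} √π Γ(2a)` says exactly that
`B(a, 1/2) = 2^{2a-1} B(a, a)`.
-/

open MeasureTheory ProbabilityTheory

lemma integral_rpow_mul_one_sub_rpow_eq_beta {α β : ℝ} (hα : 0 < α) (hβ : 0 < β) :
    ∫ x in (0:ℝ)..1, x ^ (α - 1) * (1 - x) ^ (β - 1) = beta α β := by
  rw [beta_eq_betaIntegralReal α β hα hβ, ← Complex.ofReal_re (∫ x in (0:ℝ)..1, _),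
    ← intervalIntegral.integral_ofReal, Complex.betaIntegral]
  congr 1
  refine intervalIntegral.integral_congr fun x hx => ?_
  rw [uIcc_of_le zero_le_one] at hx
  push_cast
  rw [Complex.ofReal_cpow hx.1, Complex.ofReal_cpow (sub_nonneg.2 hx.2)]
  push_cast
  ring

lemma integral_one_sub_rpow_rpow {q : ℝ} (hq : 0 < q) (c : ℝ) :
    ∫ t in (0:ℝ)..1, (1 - t ^ q) ^ c =
      q⁻¹ * ∫ u in (0:ℝ)..1, u ^ (q⁻¹ - 1) * (1 - u) ^ c := by
  simp only [intervalIntegral.integral_of_le zero_le_one, integral_Ioc_eq_integral_Ioo]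
  have himage : (fun t : ℝ => t ^ q) '' Ioo 0 1 = Ioo 0 1 := by
    ext u
    constructor
    · rintro ⟨t, ⟨ht0, ht1⟩, rfl⟩
      exact ⟨rpow_pos_of_pos ht0 q, rpow_lt_one ht0.le ht1 hq⟩
    · rintro ⟨hu0, hu1⟩
      refine ⟨u ^ q⁻¹,
        ⟨rpow_pos_of_pos hu0 _, rpow_lt_one hu0.le hu1 (inv_pos.2 hq)⟩, ?_⟩
      simp only [← rpow_mul hu0.le, inv_mul_cancel₀ hq.ne', rpow_one]
  have hsubst := integral_image_eq_integral_abs_deriv_smul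
    (measurableSet_Ioo (a := (0:ℝ)) (b := 1))
    (fun t ht => (hasDerivAt_rpow_const (Or.inl ht.1.ne')).hasDerivWithinAt)
    ((rpow_left_injOn hq.ne').mono fun t ht => ht.1.le)
    (fun u : ℝ => u ^ (q⁻¹ - 1) * (1 - u) ^ c)
  rw [himage] at hsubst
  rw [hsubst, ← integral_const_mul]
  refine setIntegral_congr_fun measurableSet_Ioo fun t ht => ?_
  have hpow : t ^ (q - 1) * (t ^ q) ^ (q⁻¹ - 1) = 1 := by
    rw [← rpow_mul ht.1.le, ← rpow_add ht.1, mul_sub, mul_inv_cancel₀ hq.ne']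
    simp
  rw [smul_eq_mul, abs_of_nonneg (mul_nonneg hq.le (rpow_nonneg ht.1.le _))]
  linear_combination
    -(q⁻¹ * q * (1 - t ^ q) ^ c) * hpow - (1 - t ^ q) ^ c * inv_mul_cancel₀ hq.ne'

lemma genF_one_eq_beta {p q : ℝ} (hp : 1 / p < 1) (hq : 0 < q) :
    genF p q 1 = q⁻¹ * beta q⁻¹ (1 - 1 / p) := by
  rw [genF, integral_one_sub_rpow_rpow hq, ← integral_rpow_mul_one_sub_rpow_eq_beta
    (inv_pos.2 hq) (sub_pos.2 hp), sub_sub_cancel_left]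

lemma beta_one_half_right {a : ℝ} (ha : 0 < a) :
    beta a (1 / 2) = 2 ^ (2 * a - 1) * beta a a := by
  have hduplication := Real.Gamma_mul_Gamma_add_half a
  have hpow : (2:ℝ) ^ (2 * a - 1) * 2 ^ (1 - 2 * a) = 1 := by
    rw [← rpow_add two_pos]; simp
  have hΓ2a := Real.Gamma_pos_of_pos (by positivity : 0 < 2 * a)
  have hΓhalf := Real.Gamma_pos_of_pos (by positivity : 0 < a + 1 / 2)
  rw [beta, beta, Real.Gamma_one_half_eq, ← two_mul, div_eq_iff hΓhalf.ne', ← mul_div_assoc,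
    div_mul_eq_mul_div, eq_div_iff hΓ2a.ne']
  linear_combination (-(2 ^ (2 * a - 1) * Real.Gamma a)) * hduplication -
    (Real.Gamma a * √π * Real.Gamma (2 * a)) * hpow

/-- For `2 ≤ q < ∞` and `q* = q/(q−1)`, one has `π_{2,q} = 2^{2/q − 1} π_{q*,q}`. -/
theorem genPi_two_eq (q : ℝ) (hq : 2 ≤ q) :
    genPi 2 q = 2 ^ (2 / q - 1) * genPi (q / (q - 1)) q := by
  have hq0 : 0 < q := by linarith
  have hconj : 1 - 1 / (q / (q - 1)) = q⁻¹ := by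
    field_simp
    ring
  have hF2 : genF 2 q 1 = q⁻¹ * beta q⁻¹ (1 / 2) := by
    rw [genF_one_eq_beta (by norm_num) hq0]
    norm_num
  have hFconj : genF (q / (q - 1)) q 1 = q⁻¹ * beta q⁻¹ q⁻¹ := by
    rw [genF_one_eq_beta (by rw [← sub_pos, hconj]; positivity) hq0, hconj]
  rw [genPi, genPi, hF2, hFconj, beta_one_half_right (inv_pos.2 hq0)]
  ring_nf
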